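/- Let φ: [0,T] → ℝ be continuous with T ≥ 1, and set M = ∫₀^T ∫₀^T exp(|φ(t) − φ(s)| / |t−s|^{1/4}) dt ds (assumed finite). Then there exist universal constants C₁, C₂ > 0 such that for all 0 < δ ≤ 1/2 and all s, t ∈ [0,T] with |s−t| ≤ δ, |φ(t) − φ(s)| ≤ (C₁ + C₂ log M) · δ^{1/4} · log(1/δ). -/

import Mathlib

/-!
Write `A(I)` for the average of `φ` over an interval `I` and `q(x, y) = |φ x - φ y| / |x - y|^α`.
For intervals `I' ⊆ I`, `A(I) - A(I')` is the average of `φ y - φ x` over `I' × I`, and there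
`|φ y - φ x| ≤ |I|^α q(x, y)`; Jensen's inequality for `exp` turns the average of `q` into a
logarithm, `|A(I) - A(I')| ≤ |I|^α log (M / (|I| |I'|))`. Shrinking `[s, t]` dyadically towards
either endpoint and summing these bounds (a geometric series in `2^(-α)`) gives, by continuity,
`|φ t - φ s| ≲ |t - s|^α (1 + log M + log (1 / |t - s|))`. Finally
`r^α log (1 / r) ≤ δ^α (log (1 / δ) + 1 / α)` for `r ≤ δ ≤ 1`, and `log (1 / δ) ≥ log 2`.
-/

open MeasureTheory Set Filter Topology

section Averages

variable {Ω : Type*} [MeasurableSpace Ω] {μ : Measure Ω}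

theorem integrable_of_integrable_exp {g : Ω → ℝ} (hg : 0 ≤ g)
    (hexp : Integrable (fun x => Real.exp (g x)) μ) : Integrable g μ := by
  refine hexp.mono ?_ (Eventually.of_forall fun x => ?_)
  · simpa only [Real.log_exp] using hexp.aemeasurable.log.aestronglyMeasurable
  · rw [Real.norm_eq_abs, Real.norm_eq_abs, abs_of_nonneg (hg x), Real.abs_exp]
    linarith [Real.add_one_le_exp (g x)]

variable [IsFiniteMeasure μ] [NeZero μ]

theorem average_le_log_average_exp {g : Ω → ℝ} (hg : Integrable g μ)
    (hexp : Integrable (fun x => Real.exp (g x)) μ) :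
    ⨍ x, g x ∂μ ≤ Real.log (⨍ x, Real.exp (g x) ∂μ) := by
  have h := convexOn_exp.map_average_le Real.continuous_exp.continuousOn isClosed_univ
    (by simp) hg hexp
  exact (Real.le_log_iff_exp_le ((Real.exp_pos _).trans_le h)).2 h

theorem abs_average_le_mul_log_of_average_exp_le {h g : Ω → ℝ} {c K : ℝ} (hc : 0 ≤ c)
    (hh : Integrable h μ) (hg : Integrable g μ) (hexp : Integrable (fun x => Real.exp (g x)) μ)
    (hhg : ∀ᵐ x ∂μ, |h x| ≤ c * g x) (hK : ⨍ x, Real.exp (g x) ∂μ ≤ K) :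
    |⨍ x, h x ∂μ| ≤ c * Real.log K := by
  have hμ : 0 ≤ (μ.real univ)⁻¹ := inv_nonneg.2 measureReal_nonneg
  have hpos : 0 < ⨍ x, Real.exp (g x) ∂μ := by
    rw [average_eq, smul_eq_mul]
    exact mul_pos (inv_pos.2 measureReal_univ_pos) (integral_exp_pos hexp)
  calc |⨍ x, h x ∂μ| = (μ.real univ)⁻¹ * |∫ x, h x ∂μ| := by
        rw [average_eq, smul_eq_mul, abs_mul, abs_of_nonneg hμ]
    _ ≤ (μ.real univ)⁻¹ * ∫ x, c * g x ∂μ := by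
        gcongr
        exact abs_integral_le_integral_abs.trans (integral_mono_ae hh.abs (hg.const_mul c) hhg)
    _ = c * ⨍ x, g x ∂μ := by
        rw [integral_const_mul, average_eq, smul_eq_mul]; ring
    _ ≤ c * Real.log K := by
        gcongr
        exact (average_le_log_average_exp hg hexp).trans (Real.log_le_log hpos hK)

end Averages

theorem average_fun_snd_sub_fun_fst {X : Type*} [MeasurableSpace X] {μ ν : Measure X}
    [IsFiniteMeasure μ] [IsFiniteMeasure ν] [NeZero μ] [NeZero ν] {f : X → ℝ}
    (hμ : Integrable f μ) (hν : Integrable f ν) :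
    ⨍ p, (f p.2 - f p.1) ∂(μ.prod ν) = ⨍ y, f y ∂ν - ⨍ x, f x ∂μ := by
  have hμ0 : μ.real univ ≠ 0 := measureReal_univ_pos.ne'
  have hν0 : ν.real univ ≠ 0 := measureReal_univ_pos.ne'
  rw [average_eq, average_eq, average_eq, integral_sub (hν.comp_snd μ) (hμ.comp_fst ν),
    integral_fun_snd, integral_fun_fst, ← univ_prod_univ, measureReal_prod_prod]
  simp only [smul_eq_mul]
  field_simp

theorem intervalAverage_sub_intervalAverage_eq_setAverage {φ : ℝ → ℝ} {a b a' b' : ℝ}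
    (hab : a < b) (hab' : a' < b') (hφ : IntegrableOn φ (Ioc a b))
    (hφ' : IntegrableOn φ (Ioc a' b')) :
    (⨍ x in a..b, φ x) - ⨍ x in a'..b', φ x = ⨍ p in Ioc a' b' ×ˢ Ioc a b, (φ p.2 - φ p.1) := by
  have : NeZero (volume.restrict (Ioc a b)) := ⟨by simp [Measure.restrict_eq_zero, hab]⟩
  have : NeZero (volume.restrict (Ioc a' b')) := ⟨by simp [Measure.restrict_eq_zero, hab']⟩
  rw [uIoc_of_le hab.le, uIoc_of_le hab'.le, Measure.volume_eq_prod, ← Measure.prod_restrict]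
  exact (average_fun_snd_sub_fun_fst hφ' hφ).symm

theorem setAverage_Ioc_prod_le_div {f : ℝ × ℝ → ℝ} {S : Set (ℝ × ℝ)} (hf : IntegrableOn f S)
    (hf0 : 0 ≤ f) {M : ℝ} (hM : ∫ p in S, f p ≤ M) {a b a' b' : ℝ} (hab : a ≤ b)
    (hab' : a' ≤ b') (hS : Ioc a' b' ×ˢ Ioc a b ⊆ S) :
    ⨍ p in Ioc a' b' ×ˢ Ioc a b, f p ≤ M / ((b - a) * (b' - a')) := by
  rw [setAverage_eq, Measure.volume_eq_prod, measureReal_prod_prod, Real.volume_real_Ioc_of_le hab,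
    Real.volume_real_Ioc_of_le hab', smul_eq_mul, mul_comm (b' - a'), div_eq_inv_mul,
    ← Measure.volume_eq_prod]
  refine mul_le_mul_of_nonneg_left (le_trans ?_ hM) (by positivity)
  exact setIntegral_mono_set hf (Eventually.of_forall hf0) (Eventually.of_forall hS)

theorem tendsto_intervalAverage_of_mem_Icc {φ : ℝ → ℝ} {s : Set ℝ} (hφ : ContinuousOn φ s)
    {a b : ℕ → ℝ} (hab : ∀ n, a n < b n) (hs : ∀ n, Icc (a n) (b n) ⊆ s) {x : ℝ}
    (hx : ∀ n, x ∈ Icc (a n) (b n)) (hlen : Tendsto (fun n => b n - a n) atTop (𝓝 0)) :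
    Tendsto (fun n => ⨍ y in a n..b n, φ y) atTop (𝓝 (φ x)) := by
  choose c hc hφc using fun n => exists_eq_interval_average (hab n).ne
    (hφ.mono (uIcc_of_le (hab n).le ▸ hs n))
  have hcI : ∀ n, c n ∈ Icc (a n) (b n) := fun n =>
    Ioo_subset_Icc_self (uIoo_of_le (hab n).le ▸ hc n)
  have hcx : Tendsto c atTop (𝓝[s] x) := by
    refine tendsto_nhdsWithin_iff.2 ⟨?_, Eventually.of_forall fun n => hs n (hcI n)⟩
    refine tendsto_iff_dist_tendsto_zero.2 (squeeze_zero (fun _ => dist_nonneg) (fun n => ?_) hlen)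
    rw [Real.dist_eq, abs_sub_le_iff]
    constructor <;> linarith [(hcI n).1, (hcI n).2, (hx n).1, (hx n).2]
  exact ((hφ x (hs 0 (hx 0))).tendsto.comp hcx).congr hφc

theorem intervalIntegral_intervalIntegral_eq_setIntegral_Icc_prod {E : Type*}
    [NormedAddCommGroup E] [NormedSpace ℝ E] {f : ℝ × ℝ → E} {a b c d : ℝ} (hab : a ≤ b)
    (hcd : c ≤ d) (hf : IntegrableOn f (Icc a b ×ˢ Icc c d)) :
    ∫ x in a..b, ∫ y in c..d, f (x, y) = ∫ p in Icc a b ×ˢ Icc c d, f p := by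
  simp_rw [intervalIntegral.integral_of_le hab, intervalIntegral.integral_of_le hcd,
    ← integral_Icc_eq_integral_Ioc]
  rw [Measure.volume_eq_prod, setIntegral_prod _ hf]

theorem div_two_pow_rpow_mul_log_eq {α r M : ℝ} (hr : 0 < r) (hM : 0 < M) (n : ℕ) :
    (r / 2 ^ n) ^ α * Real.log (M / (r / 2 ^ n * (r / 2 ^ (n + 1)))) =
      r ^ α * (Real.log (2 * M / r ^ 2) * ((2:ℝ) ^ α)⁻¹ ^ n +
        2 * Real.log 2 * (n * ((2:ℝ) ^ α)⁻¹ ^ n)) := by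
  rw [Real.div_rpow hr.le (by positivity), ← Real.rpow_pow_comm zero_le_two,
    div_eq_mul_inv _ ((2 ^ α) ^ n), ← inv_pow, Real.log_div hM.ne' (by positivity),
    Real.log_mul (by positivity) (by positivity), Real.log_div hr.ne' (by positivity),
    Real.log_div hr.ne' (by positivity), Real.log_div (by positivity) (by positivity),
    Real.log_mul two_ne_zero hM.ne', Real.log_pow, Real.log_pow, Real.log_pow]
  push_cast
  ring

theorem rpow_mul_add_log_inv_le {α r δ A B : ℝ} (hα : 0 < α) (hr : 0 < r) (hrδ : r ≤ δ)
    (hδ : δ ≤ 1 / 2) (hA : 0 ≤ A) (hB : 0 ≤ B) :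
    r ^ α * (A + B * Real.log r⁻¹) ≤
      (A / Real.log 2 + B * (1 + (α * Real.log 2)⁻¹)) * (δ ^ α * Real.log δ⁻¹) := by
  have hδ0 : 0 < δ := hr.trans_le hrδ
  have hlog2 : 0 < Real.log 2 := Real.log_pos one_lt_two
  have hlogδ : Real.log 2 ≤ Real.log δ⁻¹ :=
    Real.log_le_log two_pos (by rw [le_inv_comm₀ two_pos hδ0]; linarith)
  have hlog_r : r ^ α * Real.log r⁻¹ ≤ δ ^ α * (Real.log δ⁻¹ + α⁻¹) := by
    have hsplit : Real.log r⁻¹ = Real.log δ⁻¹ + Real.log (δ / r) := by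
      rw [← Real.log_mul (by positivity) (by positivity)]; congr 1; field_simp
    have hratio : r ^ α * Real.log (δ / r) ≤ δ ^ α * α⁻¹ := by
      calc r ^ α * Real.log (δ / r) ≤ r ^ α * ((δ / r) ^ α / α) := by
            gcongr; exact Real.log_le_rpow_div (by positivity) hα
        _ = δ ^ α * α⁻¹ := by
            rw [Real.div_rpow hδ0.le hr.le]; field_simp
    rw [hsplit, mul_add, mul_add]
    gcongr
    exact hlog2.le.trans hlogδ
  have hδα_le : δ ^ α ≤ δ ^ α * Real.log δ⁻¹ / Real.log 2 := by
    rw [le_div_iff₀ hlog2]; gcongr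
  calc r ^ α * (A + B * Real.log r⁻¹) = A * r ^ α + B * (r ^ α * Real.log r⁻¹) := by ring
    _ ≤ A * δ ^ α + B * (δ ^ α * (Real.log δ⁻¹ + α⁻¹)) := by gcongr
    _ = A * δ ^ α + B * (δ ^ α * Real.log δ⁻¹) + B * α⁻¹ * δ ^ α := by ring
    _ ≤ A * (δ ^ α * Real.log δ⁻¹ / Real.log 2) + B * (δ ^ α * Real.log δ⁻¹) +
        B * α⁻¹ * (δ ^ α * Real.log δ⁻¹ / Real.log 2) := by gcongr
    _ = (A / Real.log 2 + B * (1 + (α * Real.log 2)⁻¹)) * (δ ^ α * Real.log δ⁻¹) := by ring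

noncomputable def holderQuotient (φ : ℝ → ℝ) (α : ℝ) (p : ℝ × ℝ) : ℝ :=
  |φ p.1 - φ p.2| / |p.1 - p.2| ^ α

section HolderQuotient

variable {φ : ℝ → ℝ} {α : ℝ}

theorem holderQuotient_nonneg (p : ℝ × ℝ) : 0 ≤ holderQuotient φ α p :=
  div_nonneg (abs_nonneg _) (Real.rpow_nonneg (abs_nonneg _) _)

theorem abs_sub_le_rpow_mul_holderQuotient (hα : 0 ≤ α) {x y L : ℝ} (h : |x - y| ≤ L) :
    |φ x - φ y| ≤ L ^ α * holderQuotient φ α (x, y) := by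
  rcases eq_or_ne x y with rfl | hxy
  · simpa using mul_nonneg (Real.rpow_nonneg ((abs_nonneg _).trans h) α)
      (holderQuotient_nonneg _)
  have hpos : 0 < |x - y| ^ α := Real.rpow_pos_of_pos (abs_pos.2 (sub_ne_zero.2 hxy)) α
  calc |φ x - φ y| = |x - y| ^ α * holderQuotient φ α (x, y) := by
        rw [holderQuotient, mul_div_cancel₀ _ hpos.ne']
    _ ≤ L ^ α * holderQuotient φ α (x, y) := by
        gcongr
        exact holderQuotient_nonneg _

theorem abs_intervalAverage_sub_le (hα : 0 ≤ α) {S : Set (ℝ × ℝ)}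
    (hF : IntegrableOn (fun p => Real.exp (holderQuotient φ α p)) S) {M : ℝ}
    (hM : ∫ p in S, Real.exp (holderQuotient φ α p) ≤ M) {a b a' b' : ℝ}
    (hφ : ContinuousOn φ (Icc a b)) (hS : Icc a b ×ˢ Icc a b ⊆ S)
    (ha : a ≤ a') (hab' : a' < b') (hb : b' ≤ b) :
    |(⨍ x in a..b, φ x) - ⨍ x in a'..b', φ x| ≤
      (b - a) ^ α * Real.log (M / ((b - a) * (b' - a'))) := by
  have hab : a < b := ha.trans_lt (hab'.trans_le hb)
  have hbox : Ioc a' b' ×ˢ Ioc a b ⊆ Icc a b ×ˢ Icc a b :=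
    prod_mono (Ioc_subset_Icc_self.trans (Icc_subset_Icc ha hb)) Ioc_subset_Icc_self
  have : IsFiniteMeasure (volume.restrict (Ioc a' b' ×ˢ Ioc a b)) :=
    isFiniteMeasure_restrict.2 (ne_top_of_le_ne_top
      (isCompact_Icc.prod isCompact_Icc).measure_lt_top.ne (measure_mono hbox))
  have : NeZero (volume.restrict (Ioc a' b' ×ˢ Ioc a b)) := ⟨by
    simp [Measure.restrict_eq_zero, Measure.volume_eq_prod, Measure.prod_prod, hab, hab']⟩
  have hexp : IntegrableOn (fun p => Real.exp (holderQuotient φ α p)) (Ioc a' b' ×ˢ Ioc a b) :=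
    hF.mono_set (hbox.trans hS)
  have hcont : ContinuousOn (fun p : ℝ × ℝ => φ p.2 - φ p.1) (Icc a b ×ˢ Icc a b) :=
    (hφ.comp continuousOn_snd fun p hp => hp.2).sub (hφ.comp continuousOn_fst fun p hp => hp.1)
  have hdiff : ∀ᵐ p ∂volume.restrict (Ioc a' b' ×ˢ Ioc a b),
      |φ p.2 - φ p.1| ≤ (b - a) ^ α * holderQuotient φ α p := by
    rw [ae_restrict_iff' (measurableSet_Ioc.prod measurableSet_Ioc)]
    refine Eventually.of_forall fun p hp => ?_
    rw [abs_sub_comm]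
    refine abs_sub_le_rpow_mul_holderQuotient hα (abs_sub_le_iff.2 ⟨?_, ?_⟩)
    · linarith [hp.1.2, hp.2.1]
    · linarith [hp.1.1, hp.2.2]
  have hφI : IntegrableOn φ (Icc a b) := hφ.integrableOn_Icc
  rw [intervalAverage_sub_intervalAverage_eq_setAverage hab hab'
    (hφI.mono_set Ioc_subset_Icc_self)
    (hφI.mono_set (Ioc_subset_Icc_self.trans (Icc_subset_Icc ha hb)))]
  exact abs_average_le_mul_log_of_average_exp_le (by positivity)
    ((hcont.integrableOn_compact (isCompact_Icc.prod isCompact_Icc)).mono_set hbox)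
    (integrable_of_integrable_exp holderQuotient_nonneg hexp) hexp hdiff
    (setAverage_Ioc_prod_le_div hF (fun p => (Real.exp_pos _).le) hM hab.le hab'.le
      (hbox.trans hS))

theorem abs_intervalAverage_sub_le_of_dyadic (hα : 0 < α) {S : Set (ℝ × ℝ)}
    (hF : IntegrableOn (fun p => Real.exp (holderQuotient φ α p)) S) {M : ℝ}
    (hM : ∫ p in S, Real.exp (holderQuotient φ α p) ≤ M) (hM0 : 0 < M)
    {r : ℝ} (hr : 0 < r) {a b : ℕ → ℝ} (ha : Monotone a) (hb : Antitone b)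
    (hlen : ∀ n, b n - a n = r / 2 ^ n) {x : ℝ} (hx : ∀ n, x ∈ Icc (a n) (b n))
    (hφ : ContinuousOn φ (Icc (a 0) (b 0))) (hS : Icc (a 0) (b 0) ×ˢ Icc (a 0) (b 0) ⊆ S) :
    |(⨍ y in a 0..b 0, φ y) - φ x| ≤
      r ^ α * (Real.log (2 * M / r ^ 2) / (1 - ((2:ℝ) ^ α)⁻¹) +
        2 * Real.log 2 * ((2:ℝ) ^ α)⁻¹ / (1 - ((2:ℝ) ^ α)⁻¹) ^ 2) := by
  set q : ℝ := ((2:ℝ) ^ α)⁻¹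
  have hq0 : 0 ≤ q := inv_nonneg.2 (Real.rpow_nonneg zero_le_two α)
  have hq1 : q < 1 := inv_lt_one_of_one_lt₀ (Real.one_lt_rpow one_lt_two hα)
  have hab : ∀ n, a n < b n := fun n => sub_pos.1 (by rw [hlen]; positivity)
  have hsub : ∀ n, Icc (a n) (b n) ⊆ Icc (a 0) (b 0) := fun n =>
    Icc_subset_Icc (ha (Nat.zero_le n)) (hb (Nat.zero_le n))
  have hstep : ∀ n, dist (⨍ y in a n..b n, φ y) (⨍ y in a (n + 1)..b (n + 1), φ y) ≤
      r ^ α * (Real.log (2 * M / r ^ 2) * q ^ n + 2 * Real.log 2 * (n * q ^ n)) := fun n => by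
    rw [← div_two_pow_rpow_mul_log_eq hr hM0, ← hlen, ← hlen]
    exact abs_intervalAverage_sub_le hα.le hF hM (hφ.mono (hsub n))
      ((prod_mono (hsub n) (hsub n)).trans hS) (ha n.le_succ) (hab (n + 1)) (hb n.le_succ)
  have hsum : HasSum
      (fun n : ℕ => r ^ α * (Real.log (2 * M / r ^ 2) * q ^ n + 2 * Real.log 2 * (n * q ^ n)))
      (r ^ α * (Real.log (2 * M / r ^ 2) * (1 - q)⁻¹ + 2 * Real.log 2 * (q / (1 - q) ^ 2))) := by
    have h₁ : HasSum (fun n : ℕ => q ^ n) (1 - q)⁻¹ := hasSum_geometric_of_lt_one hq0 hq1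
    have h₂ : HasSum (fun n : ℕ => (n : ℝ) * q ^ n) (q / (1 - q) ^ 2) :=
      hasSum_coe_mul_geometric_of_norm_lt_one (by rwa [Real.norm_eq_abs, abs_of_nonneg hq0])
    exact ((h₁.mul_left _).add (h₂.mul_left _)).mul_left _
  have hlen0 : Tendsto (fun n => b n - a n) atTop (𝓝 0) := by
    simp_rw [hlen, div_eq_mul_inv, ← inv_pow]
    simpa using (tendsto_pow_atTop_nhds_zero_of_lt_one (by norm_num)
      (by norm_num : (2:ℝ)⁻¹ < 1)).const_mul r
  have hbound := dist_le_tsum_of_dist_le_of_tendsto₀ _ hstep hsum.summable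
    (tendsto_intervalAverage_of_mem_Icc hφ hab hsub hx hlen0)
  rw [hsum.tsum_eq, Real.dist_eq] at hbound
  convert hbound using 2
  ring

theorem abs_sub_le_of_integrable_exp_holderQuotient (hα : 0 < α) {S : Set (ℝ × ℝ)}
    (hF : IntegrableOn (fun p => Real.exp (holderQuotient φ α p)) S) {M : ℝ}
    (hM : ∫ p in S, Real.exp (holderQuotient φ α p) ≤ M) (hM0 : 0 < M)
    {s t : ℝ} (hst : s < t) (hφ : ContinuousOn φ (Icc s t)) (hS : Icc s t ×ˢ Icc s t ⊆ S) :
    |φ t - φ s| ≤ 2 * ((t - s) ^ α * (Real.log (2 * M / (t - s) ^ 2) / (1 - ((2:ℝ) ^ α)⁻¹) +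
        2 * Real.log 2 * ((2:ℝ) ^ α)⁻¹ / (1 - ((2:ℝ) ^ α)⁻¹) ^ 2)) := by
  have hr : 0 < t - s := sub_pos.2 hst
  have hdy : Antitone fun n : ℕ => (t - s) / 2 ^ n := fun m n hmn =>
    div_le_div_of_nonneg_left hr.le (by positivity) (pow_le_pow_right₀ one_le_two hmn)
  have hdy0 : ∀ n : ℕ, 0 ≤ (t - s) / 2 ^ n := fun n => by positivity
  have hleft := abs_intervalAverage_sub_le_of_dyadic hα hF hM hM0 hr
    (a := fun n => t - (t - s) / 2 ^ n) (b := fun _ => t) (x := t)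
    (fun m n h => sub_le_sub_left (hdy h) t) antitone_const (fun n => sub_sub_cancel t _)
    (fun n => ⟨sub_le_self t (hdy0 n), le_rfl⟩) (by simpa using hφ) (by simpa using hS)
  have hright := abs_intervalAverage_sub_le_of_dyadic hα hF hM hM0 hr
    (a := fun _ => s) (b := fun n => s + (t - s) / 2 ^ n) (x := s)
    monotone_const (fun m n h => (add_le_add_iff_left s).2 (hdy h))
    (fun n => add_sub_cancel_left s _) (fun n => ⟨le_rfl, le_add_of_nonneg_right (hdy0 n)⟩)
    (by simpa using hφ) (by simpa using hS)
  simp only [pow_zero, div_one, sub_sub_cancel, add_sub_cancel] at hleft hright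
  rw [abs_le] at hleft hright ⊢
  constructor <;> linarith [hleft.1, hleft.2, hright.1, hright.2]

theorem one_le_setIntegral_exp_holderQuotient_Icc {T : ℝ} (hT : 1 ≤ T)
    (hF : IntegrableOn (fun p => Real.exp (holderQuotient φ α p)) (Icc 0 T ×ˢ Icc 0 T)) :
    1 ≤ ∫ p in Icc 0 T ×ˢ Icc 0 T, Real.exp (holderQuotient φ α p) := by
  have hvol : volume.real (Icc (0:ℝ) T ×ˢ Icc (0:ℝ) T) = T * T := by
    rw [Measure.volume_eq_prod, measureReal_prod_prod, Real.volume_real_Icc_of_le (by linarith),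
      sub_zero]
  have := setIntegral_ge_of_const_le_real (measurableSet_Icc.prod measurableSet_Icc)
    (isCompact_Icc.prod isCompact_Icc).measure_lt_top.ne
    (fun p _ => Real.one_le_exp (holderQuotient_nonneg p)) hF
  rw [hvol] at this
  nlinarith

end HolderQuotient

theorem exists_abs_sub_le_mul_rpow_mul_log {α : ℝ} (hα : 0 < α) :
    ∃ C₁ C₂ : ℝ, 0 < C₁ ∧ 0 < C₂ ∧ ∀ (φ : ℝ → ℝ) (S : Set (ℝ × ℝ)) (M s t δ : ℝ),
      IntegrableOn (fun p => Real.exp (holderQuotient φ α p)) S →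
      ∫ p in S, Real.exp (holderQuotient φ α p) ≤ M → 1 ≤ M →
      ContinuousOn φ (Icc s t) → Icc s t ×ˢ Icc s t ⊆ S →
      0 < δ → δ ≤ 1 / 2 → s ≤ t → t - s ≤ δ →
      |φ t - φ s| ≤ (C₁ + C₂ * Real.log M) * δ ^ α * Real.log δ⁻¹ := by
  set q : ℝ := ((2:ℝ) ^ α)⁻¹
  have hq1 : 0 < 1 - q := sub_pos.2 (inv_lt_one_of_one_lt₀ (Real.one_lt_rpow one_lt_two hα))
  refine ⟨2 / (1 - q) + 4 * q / (1 - q) ^ 2 + 4 / (1 - q) * (1 + (α * Real.log 2)⁻¹),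
    2 / (1 - q) / Real.log 2, by positivity, by positivity, ?_⟩
  intro φ S M s t δ hF hM hM1 hφ hS hδ hδ2 hst htδ
  have hlogM : 0 ≤ Real.log M := Real.log_nonneg hM1
  rcases hst.eq_or_lt with rfl | hst
  · have : 0 ≤ Real.log δ⁻¹ := Real.log_nonneg ((one_le_inv₀ hδ).2 (by linarith))
    rw [sub_self, abs_zero]
    positivity
  have hr : 0 < t - s := sub_pos.2 hst
  have hlog : Real.log (2 * M / (t - s) ^ 2) =
      Real.log 2 + Real.log M + 2 * Real.log (t - s)⁻¹ := by
    rw [Real.log_div (by positivity) (by positivity), Real.log_mul two_ne_zero (by positivity),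
      Real.log_pow, Real.log_inv]
    push_cast
    ring
  calc |φ t - φ s|
      ≤ 2 * ((t - s) ^ α * (Real.log (2 * M / (t - s) ^ 2) / (1 - q) +
          2 * Real.log 2 * q / (1 - q) ^ 2)) :=
        abs_sub_le_of_integrable_exp_holderQuotient hα hF hM (by linarith) hst hφ hS
    _ = (t - s) ^ α * ((2 * Real.log 2 / (1 - q) + 4 * Real.log 2 * q / (1 - q) ^ 2 +
          2 / (1 - q) * Real.log M) + 4 / (1 - q) * Real.log (t - s)⁻¹) := by
        rw [hlog]; ring
    _ ≤ ((2 * Real.log 2 / (1 - q) + 4 * Real.log 2 * q / (1 - q) ^ 2 +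
          2 / (1 - q) * Real.log M) / Real.log 2 + 4 / (1 - q) * (1 + (α * Real.log 2)⁻¹)) *
          (δ ^ α * Real.log δ⁻¹) :=
        rpow_mul_add_log_inv_le hα hr htδ hδ2 (by positivity) (by positivity)
    _ = _ := by field_simp; ring

theorem stmt_3 :
    ∃ C₁ C₂ : ℝ, 0 < C₁ ∧ 0 < C₂ ∧
      ∀ (T : ℝ) (φ : ℝ → ℝ) (M : ℝ), 1 ≤ T → ContinuousOn φ (Set.Icc 0 T) →
        M = ∫ t in (0:ℝ)..T, ∫ s in (0:ℝ)..T,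
              Real.exp (|φ t - φ s| / |t - s| ^ ((1:ℝ)/4)) →
        IntegrableOn
          (fun p : ℝ × ℝ => Real.exp (|φ p.1 - φ p.2| / |p.1 - p.2| ^ ((1:ℝ)/4)))
          (Set.Icc 0 T ×ˢ Set.Icc 0 T) →
        ∀ δ s t : ℝ, 0 < δ → δ ≤ 1/2 → s ∈ Set.Icc (0:ℝ) T → t ∈ Set.Icc (0:ℝ) T →
          |s - t| ≤ δ →
          |φ t - φ s| ≤ (C₁ + C₂ * Real.log M) * δ ^ ((1:ℝ)/4) * Real.log (1/δ) := by
  obtain ⟨C₁, C₂, hC₁, hC₂, hbound⟩ :=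
    exists_abs_sub_le_mul_rpow_mul_log (α := 1 / 4) (by norm_num)
  refine ⟨C₁, C₂, hC₁, hC₂, fun T φ M hT hφ hM hF δ s t hδ hδ2 hs ht hst => ?_⟩
  have hM' : ∫ p in Icc 0 T ×ˢ Icc 0 T, Real.exp (holderQuotient φ (1 / 4) p) = M :=
    (hM.trans (intervalIntegral_intervalIntegral_eq_setIntegral_Icc_prod (by linarith)
      (by linarith) hF)).symm
  have hM1 : 1 ≤ M := hM' ▸ one_le_setIntegral_exp_holderQuotient_Icc hT hF
  have hbox {u v : ℝ} (hu : u ∈ Icc 0 T) (hv : v ∈ Icc 0 T) : Icc u v ⊆ Icc 0 T :=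
    Icc_subset_Icc hu.1 hv.2
  rw [one_div δ]
  rcases le_total s t with h | h
  · exact hbound φ _ M s t δ hF hM'.le hM1 (hφ.mono (hbox hs ht))
      (prod_mono (hbox hs ht) (hbox hs ht)) hδ hδ2 h (by linarith [neg_abs_le (s - t)])
  · rw [abs_sub_comm]
    exact hbound φ _ M t s δ hF hM'.le hM1 (hφ.mono (hbox ht hs))
      (prod_mono (hbox ht hs) (hbox ht hs)) hδ hδ2 h (by linarith [le_abs_self (s - t)])
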